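/- Let G be a connected locally finite graph. If G admits a non-constant harmonic function of finite Dirichlet energy, then G admits a non-constant bounded harmonic function of finite Dirichlet energy. -/

import Mathlib

open scoped Classical

noncomputable section

/-- `h` is harmonic on `G`: `deg(v)·h(v) = Σ_{u∼v} h(u)` for every `v`. -/
def HarmonicOn {V : Type*} (G : SimpleGraph V) [∀ u : V, Fintype (G.neighborSet u)]
    (h : V → ℝ) : Prop :=
  ∀ u : V, (G.degree u : ℝ) * h u = ∑ w ∈ G.neighborFinset u, h w

/-- `h` has finite Dirichlet energy: `(1/2)·Σ over oriented edges of (h(e⁻)−h(e⁺))² < ∞`. -/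
def FiniteDirichletEnergy {V : Type*} (G : SimpleGraph V) (h : V → ℝ) : Prop :=
  Summable (fun p : V × V => if G.Adj p.1 p.2 then (h p.1 - h p.2) ^ 2 else 0)

/-!
Clamp `h` to `[-c, c]`, where `c` bounds `|h|` at the two ends of an edge `uv` along which `h`
is not constant. The clamped function `f` is bounded and has finite energy. Its harmonic
projection `g`, the limit of the energy minimisers on finite sets `A` with boundary values `f`
off `A`, is harmonic with finite energy, and stays in `[-c, c]` because clamping a competitor
does not increase its energy. By Green's identity, harmonicity of `h` gives
`⟪∇h, ∇m_A⟫ = ⟪∇h, ∇f⟫` for every minimiser `m_A`, and this passes to the limit `g` since the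
`∇m_A` are bounded in `ℓ²`. Finally `⟪∇h, ∇f⟫ > 0`, as clamping is monotone and does nothing
at `u` and `v`; so `g` is not constant.
-/

open Filter Topology

section Summation

variable {ι : Type*}

theorem two_mul_abs_mul_le (x y : ℝ) {r : ℝ} (hr : 0 < r) :
    2 * |x * y| ≤ r * x ^ 2 + r⁻¹ * y ^ 2 := by
  have h := two_mul_le_add_sq (r * |x|) |y|
  rw [abs_mul]
  field_simp
  nlinarith [sq_abs x, sq_abs y]

theorem summable_mul_of_summable_sq {x y : ι → ℝ} (hx : Summable fun i => x i ^ 2)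
    (hy : Summable fun i => y i ^ 2) : Summable fun i => x i * y i :=
  .of_norm_bounded ((hx.add hy).div_const 2) fun i => by
    have := two_mul_abs_mul_le (x i) (y i) one_pos
    rw [Real.norm_eq_abs]
    linarith

theorem two_mul_abs_tsum_mul_le {x y : ι → ℝ} (hx : Summable fun i => x i ^ 2)
    (hy : Summable fun i => y i ^ 2) {r : ℝ} (hr : 0 < r) :
    2 * |∑' i, x i * y i| ≤ r * ∑' i, x i ^ 2 + r⁻¹ * ∑' i, y i ^ 2 := by
  have hxy := (summable_mul_of_summable_sq hx hy).abs
  calc 2 * |∑' i, x i * y i| ≤ ∑' i, 2 * |x i * y i| := by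
        rw [tsum_mul_left]
        have := norm_tsum_le_tsum_norm (f := fun i => x i * y i)
          (by simpa only [Real.norm_eq_abs] using hxy)
        simp only [Real.norm_eq_abs] at this
        linarith
    _ ≤ ∑' i, (r * x i ^ 2 + r⁻¹ * y i ^ 2) :=
        (hxy.mul_left 2).tsum_le_tsum (fun i => two_mul_abs_mul_le _ _ hr)
          ((hx.mul_left r).add (hy.mul_left r⁻¹))
    _ = r * ∑' i, x i ^ 2 + r⁻¹ * ∑' i, y i ^ 2 := by
        rw [(hx.mul_left r).tsum_add (hy.mul_left r⁻¹), tsum_mul_left, tsum_mul_left]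

theorem summable_and_tsum_le_of_tendsto {α : Type*} {l : Filter α} [l.NeBot]
    {f : α → ι → ℝ} {F : ι → ℝ} {T : ℝ} (hf0 : ∀ n i, 0 ≤ f n i)
    (hf : ∀ i, Tendsto (fun n => f n i) l (𝓝 (F i))) (hfs : ∀ n, Summable (f n))
    (hfT : ∀ n, ∑' i, f n i ≤ T) : Summable F ∧ ∑' i, F i ≤ T := by
  have hsum (s : Finset ι) : ∑ i ∈ s, F i ≤ T :=
    le_of_tendsto (tendsto_finsetSum s fun i _ => hf i) <| .of_forall fun n =>
      ((hfs n).sum_le_tsum s fun i _ => hf0 n i).trans (hfT n)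
  have hF := summable_of_sum_le (fun i => ge_of_tendsto' (hf i) (hf0 · i)) hsum
  exact ⟨hF, hF.tsum_le_of_sum_le hsum⟩

theorem tendsto_tsum_mul_of_tendsto {α : Type*} {l : Filter α} [l.NeBot] {a F : ι → ℝ}
    {f : α → ι → ℝ} {T : ℝ} (ha : Summable fun i => a i ^ 2)
    (hf : ∀ i, Tendsto (fun n => f n i) l (𝓝 (F i)))
    (hfs : ∀ n, Summable fun i => f n i ^ 2) (hfT : ∀ n, ∑' i, f n i ^ 2 ≤ T) :
    Tendsto (fun n => ∑' i, a i * f n i) l (𝓝 (∑' i, a i * F i)) := by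
  obtain ⟨hFs, hFT⟩ := summable_and_tsum_le_of_tendsto (fun n i => sq_nonneg (f n i))
    (fun i => (hf i).pow 2) hfs hfT
  -- Split off a finite set `s` outside which `a` has small `ℓ²` mass: on `s` the convergence
  -- is pointwise, and off `s` the uniform bound `T` keeps both tails small.
  rw [Metric.tendsto_nhds]
  intro ε hε
  set r := 4 * (|T| + 1) / ε with hr
  have hr0 : 0 < r := by positivity
  have hrT : r⁻¹ * T < ε / 4 := by
    rw [hr, inv_div, div_mul_eq_mul_div, div_lt_div_iff₀ (by positivity) (by norm_num)]
    nlinarith [le_abs_self T]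
  obtain ⟨s, hs⟩ : ∃ s : Finset ι, ∑' i : ↑(↑s : Set ι)ᶜ, a i ^ 2 < ε / (4 * r) :=
    ((tendsto_order.1 (tendsto_tsum_compl_atTop_zero fun i => a i ^ 2)).2 _
      (by positivity)).exists
  have tail (x : ι → ℝ) (hx : Summable fun i => x i ^ 2) (hxT : ∑' i, x i ^ 2 ≤ T) :
      |∑' i : ↑(↑s : Set ι)ᶜ, a i * x i| < ε / 4 := by
    have h2 : 2 * |∑' i : ↑(↑s : Set ι)ᶜ, a i * x i| ≤
        r * ∑' i : ↑(↑s : Set ι)ᶜ, a i ^ 2 + r⁻¹ * ∑' i : ↑(↑s : Set ι)ᶜ, x i ^ 2 :=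
      two_mul_abs_tsum_mul_le (ha.subtype _) (hx.subtype _) hr0
    have hxs := Summable.tsum_subtype_le (fun i => x i ^ 2) (↑s : Set ι)ᶜ (fun i => sq_nonneg _) hx
    have hrs : r * ∑' i : ↑(↑s : Set ι)ᶜ, a i ^ 2 < ε / 4 := by
      calc _ < r * (ε / (4 * r)) := mul_lt_mul_of_pos_left hs hr0
        _ = ε / 4 := by field_simp
    have hrx := mul_le_mul_of_nonneg_left (hxs.trans hxT) (inv_pos.2 hr0).le
    linarith
  filter_upwards [Metric.tendsto_nhds.1
    (tendsto_finsetSum s fun i _ => (hf i).const_mul (a i)) (ε / 2) (by positivity)]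
    with n hn
  rw [← (summable_mul_of_summable_sq ha (hfs n)).sum_add_tsum_compl (s := s),
    ← (summable_mul_of_summable_sq ha hFs).sum_add_tsum_compl (s := s)]
  rw [Real.dist_eq] at hn ⊢
  have h1 := tail (f n) (hfs n) (hfT n)
  have h2 := tail F hFs hFT
  rw [abs_lt] at hn h1 h2 ⊢
  constructor <;> linarith

theorem summable_and_tsum_le_of_eq_off_finset {u v : ι → ℝ} {s : Finset ι} (hv : Summable v)
    (heq : ∀ i ∉ s, u i = v i) (hle : ∑ i ∈ s, u i ≤ ∑ i ∈ s, v i) :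
    Summable u ∧ ∑' i, u i ≤ ∑' i, v i := by
  have hu : Summable u := by
    simpa using (summable_of_ne_finset_zero (s := s) fun i hi => sub_eq_zero.2 (heq i hi)).add hv
  refine ⟨hu, ?_⟩
  rw [← hu.sum_add_tsum_compl (s := s), ← hv.sum_add_tsum_compl (s := s),
    tsum_congr fun i : ↑(↑s : Set ι)ᶜ => heq i i.2]
  gcongr

theorem Finset.sum_mul_eq_zero_of_forall_sum_sq_le {s : Finset ι} {a b : ι → ℝ}
    (h : ∀ t : ℝ, ∑ i ∈ s, a i ^ 2 ≤ ∑ i ∈ s, (a i + t * b i) ^ 2) :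
    ∑ i ∈ s, a i * b i = 0 := by
  have expand (t : ℝ) : ∑ i ∈ s, (a i + t * b i) ^ 2 =
      ∑ i ∈ s, a i ^ 2 + 2 * t * ∑ i ∈ s, a i * b i + t ^ 2 * ∑ i ∈ s, b i ^ 2 := by
    simp only [Finset.mul_sum, ← Finset.sum_add_distrib]
    exact Finset.sum_congr rfl fun i _ => by ring
  set B := ∑ i ∈ s, a i * b i
  set Q := ∑ i ∈ s, b i ^ 2
  have hQ : 0 ≤ Q := Finset.sum_nonneg fun i _ => sq_nonneg _
  -- the quadratic `2 t B + t² Q` is nonnegative, so its value at `t = -B / (Q + 1)` forces `B = 0`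
  have key := h (-B / (Q + 1))
  rw [expand] at key
  have hQ1 : 0 < Q + 1 := by linarith
  have hneg : 0 ≤ -B ^ 2 * (Q + 2) := by
    have hkey := mul_nonneg (sub_nonneg.2 key) (sq_nonneg (Q + 1))
    field_simp at hkey
    nlinarith
  nlinarith [sq_nonneg B]

end Summation

namespace SimpleGraph

variable {V : Type*} {G : SimpleGraph V}

theorem Preconnected.eq_of_forall_adj {β : Type*} (hG : G.Preconnected)
    {f : V → β} (hf : ∀ u v, G.Adj u v → f u = f v) (u v : V) : f u = f v := by
  obtain ⟨p⟩ := hG u v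
  induction p with
  | nil => rfl
  | cons hadj _ ih => exact (hf _ _ hadj).trans ih

variable (G) in
def grad : (V → ℝ) →ₗ[ℝ] V × V → ℝ where
  toFun k p := if G.Adj p.1 p.2 then k p.1 - k p.2 else 0
  map_add' k k' := by ext p; simp only [Pi.add_apply]; split_ifs <;> ring
  map_smul' t k := by
    ext p; simp only [Pi.smul_apply, smul_eq_mul, RingHom.id_apply]; split_ifs <;> ring

theorem grad_apply (k : V → ℝ) (p : V × V) :
    G.grad k p = if G.Adj p.1 p.2 then k p.1 - k p.2 else 0 := rfl

theorem grad_swap (k : V → ℝ) (p : V × V) : G.grad k p.swap = -G.grad k p := by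
  simp only [grad_apply, Prod.fst_swap, Prod.snd_swap, G.adj_comm p.2 p.1]
  split_ifs <;> ring

theorem continuous_grad_apply (p : V × V) : Continuous fun k : V → ℝ => G.grad k p := by
  simp only [grad_apply]
  split_ifs
  exacts [(continuous_apply _).sub (continuous_apply _), continuous_const]

theorem finiteDirichletEnergy_iff (k : V → ℝ) :
    FiniteDirichletEnergy G k ↔ Summable fun p => G.grad k p ^ 2 := by
  refine summable_congr fun p => ?_
  rw [grad_apply]
  split_ifs <;> simp

theorem sq_grad_comp_le {φ : ℝ → ℝ} (hφ : ∀ s t, |φ s - φ t| ≤ |s - t|) (k : V → ℝ)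
    (p : V × V) : G.grad (φ ∘ k) p ^ 2 ≤ G.grad k p ^ 2 := by
  simp only [grad_apply, Function.comp_apply]
  split_ifs
  exacts [sq_le_sq.2 (hφ _ _), le_rfl]

theorem grad_mul_grad_comp_nonneg {φ : ℝ → ℝ} (hφ : Monotone φ) (k : V → ℝ) (p : V × V) :
    0 ≤ G.grad k p * G.grad (φ ∘ k) p := by
  simp only [grad_apply, Function.comp_apply]
  split_ifs
  · rcases le_total (k p.1) (k p.2) with h | h
    · exact mul_nonneg_of_nonpos_of_nonpos (by linarith) (by linarith [hφ h])
    · exact mul_nonneg (by linarith) (by linarith [hφ h])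
  · simp

theorem tsum_grad_mul_grad_comp_pos {φ : ℝ → ℝ} (hφ : Monotone φ) {k : V → ℝ}
    (hkφ : Summable fun p => G.grad k p * G.grad (φ ∘ k) p) {u v : V} (huv : G.Adj u v)
    (hne : k u ≠ k v) (hu : φ (k u) = k u) (hv : φ (k v) = k v) :
    0 < ∑' p, G.grad k p * G.grad (φ ∘ k) p := by
  refine hkφ.tsum_pos (grad_mul_grad_comp_nonneg hφ k) (u, v) ?_
  simp only [grad_apply, if_pos huv, Function.comp_apply, hu, hv]
  exact mul_self_pos.2 (sub_ne_zero.2 hne)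

variable [∀ u : V, Fintype (G.neighborSet u)]

variable (G) in
def laplacian (k : V → ℝ) (x : V) : ℝ := ∑ y ∈ G.neighborFinset x, (k x - k y)

theorem harmonicOn_iff (k : V → ℝ) : HarmonicOn G k ↔ ∀ x, G.laplacian k x = 0 := by
  simp only [HarmonicOn, laplacian, Finset.sum_sub_distrib, Finset.sum_const,
    card_neighborFinset_eq_degree, nsmul_eq_mul, sub_eq_zero]

theorem continuous_laplacian_apply (x : V) : Continuous fun k : V → ℝ => G.laplacian k x :=
  continuous_finsetSum _ fun _ _ => (continuous_apply _).sub (continuous_apply _)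

variable (G) in
def closedNbhd (A : Finset V) : Finset V := A ∪ A.biUnion fun x => G.neighborFinset x

variable (G) in
/-- A finite set of ordered pairs containing every edge that meets `A`. -/
def nbhdPairs (A : Finset V) : Finset (V × V) := G.closedNbhd A ×ˢ G.closedNbhd A

theorem subset_closedNbhd (A : Finset V) : A ⊆ G.closedNbhd A := Finset.subset_union_left

theorem mem_closedNbhd_of_adj {A : Finset V} {x y : V} (hx : x ∈ A) (hxy : G.Adj x y) :
    y ∈ G.closedNbhd A :=
  Finset.mem_union_right _ (Finset.mem_biUnion.2 ⟨x, hx, (G.mem_neighborFinset x y).2 hxy⟩)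

theorem grad_eq_zero_of_notMem_nbhdPairs {A : Finset V} {w : V → ℝ} (hw : ∀ x ∉ A, w x = 0)
    {p : V × V} (hp : p ∉ G.nbhdPairs A) : G.grad w p = 0 := by
  rw [grad_apply]
  split_ifs with hadj
  · have h1 : p.1 ∉ A := fun h =>
      hp (Finset.mem_product.2 ⟨subset_closedNbhd A h, mem_closedNbhd_of_adj h hadj⟩)
    have h2 : p.2 ∉ A := fun h =>
      hp (Finset.mem_product.2 ⟨mem_closedNbhd_of_adj h hadj.symm, subset_closedNbhd A h⟩)
    rw [hw _ h1, hw _ h2, sub_zero]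
  · rfl

/-- Green's identity. -/
theorem sum_nbhdPairs_grad_mul_grad (k : V → ℝ) {A : Finset V} {w : V → ℝ}
    (hw : ∀ x ∉ A, w x = 0) :
    ∑ p ∈ G.nbhdPairs A, G.grad k p * G.grad w p = 2 * ∑ x ∈ A, w x * G.laplacian k x := by
  set B := G.closedNbhd A
  have hsplit (x y : V) : G.grad k (x, y) * G.grad w (x, y) =
      G.grad k (x, y) * w x + G.grad k (y, x) * w y := by
    rw [show (y, x) = (x, y).swap from rfl, grad_swap]
    simp only [grad_apply]
    split_ifs <;> ring
  have hrow (x : V) (hx : x ∈ A) : ∑ y ∈ B, G.grad k (x, y) = G.laplacian k x := by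
    simp only [grad_apply, laplacian, ← Finset.sum_filter]
    congr 1
    ext y
    simp only [Finset.mem_filter, mem_neighborFinset, and_iff_right_iff_imp]
    exact mem_closedNbhd_of_adj hx
  calc ∑ p ∈ G.nbhdPairs A, G.grad k p * G.grad w p
      = ∑ x ∈ B, ∑ y ∈ B, (G.grad k (x, y) * w x + G.grad k (y, x) * w y) := by
        rw [nbhdPairs, Finset.sum_product]
        exact Finset.sum_congr rfl fun x _ => Finset.sum_congr rfl fun y _ => hsplit x y
    _ = 2 * ∑ x ∈ B, w x * ∑ y ∈ B, G.grad k (x, y) := by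
        simp only [Finset.sum_add_distrib]
        rw [Finset.sum_comm (f := fun x y => G.grad k (y, x) * w y), Finset.mul_sum]
        simp only [Finset.mul_sum, ← Finset.sum_add_distrib]
        exact Finset.sum_congr rfl fun x _ => Finset.sum_congr rfl fun y _ => by ring
    _ = 2 * ∑ x ∈ A, w x * G.laplacian k x := by
        rw [← Finset.sum_subset (subset_closedNbhd A) fun x _ hx => by rw [hw x hx, zero_mul]]
        exact congrArg _ (Finset.sum_congr rfl fun x hx => by rw [hrow x hx])

variable (G) in
def localEnergy (A : Finset V) (k : V → ℝ) : ℝ := ∑ p ∈ G.nbhdPairs A, G.grad k p ^ 2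

variable (G) in
theorem continuous_localEnergy (A : Finset V) : Continuous (G.localEnergy A) :=
  continuous_finsetSum _ fun p _ => (continuous_grad_apply p).pow 2

theorem laplacian_eq_zero_of_forall_localEnergy_le {A : Finset V} {m : V → ℝ}
    (hm : ∀ w : V → ℝ, (∀ x ∉ A, w x = 0) → G.localEnergy A m ≤ G.localEnergy A (m + w))
    {x : V} (hx : x ∈ A) : G.laplacian m x = 0 := by
  set δ : V → ℝ := Pi.single x 1
  have hδ : ∀ y ∉ A, δ y = 0 := fun y hy => Pi.single_eq_of_ne (ne_of_mem_of_not_mem hx hy).symm _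
  have hcrit := Finset.sum_mul_eq_zero_of_forall_sum_sq_le fun t => by
    simpa [localEnergy, map_add, map_smul] using hm (t • δ) fun y hy => by simp [hδ y hy]
  rw [sum_nbhdPairs_grad_mul_grad m hδ, Finset.sum_eq_single_of_mem x hx fun y _ hyx => by
    simp [δ, hyx]] at hcrit
  simpa [δ] using hcrit

/-- Clamping to `[a, b]` does not increase the local energy, so a minimiser can be sought in
the compact box of functions with values in `[a, b]`. -/
theorem exists_dirichlet_solution {a b : ℝ} (hab : a ≤ b) {f : V → ℝ}
    (hf : ∀ x, f x ∈ Set.Icc a b) (hfE : Summable fun p => G.grad f p ^ 2) (A : Finset V) :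
    ∃ m : V → ℝ, (∀ x ∉ A, m x = f x) ∧ (∀ x, m x ∈ Set.Icc a b) ∧
      (∀ x ∈ A, G.laplacian m x = 0) ∧ Summable (fun p => G.grad m p ^ 2) ∧
      ∑' p, G.grad m p ^ 2 ≤ ∑' p, G.grad f p ^ 2 := by
  set box : Set (V → ℝ) := Set.univ.pi fun x => if x ∈ A then Set.Icc a b else {f x}
  have hbox : IsCompact box := isCompact_univ_pi fun x => by
    split_ifs
    exacts [isCompact_Icc, isCompact_singleton]
  obtain ⟨m, hm, hmin⟩ := hbox.exists_isMinOn ⟨f, fun x _ => by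
    by_cases hx : x ∈ A <;> simp [hx, hf x]⟩
    (G.continuous_localEnergy A).continuousOn
  have hmf (x : V) (hx : x ∉ A) : m x = f x := by simpa [hx] using hm x (Set.mem_univ x)
  have hmin' (k : V → ℝ) (hk : ∀ x ∉ A, k x = f x) : G.localEnergy A m ≤ G.localEnergy A k := by
    let clamp : ℝ → ℝ := fun s => Set.projIcc a b hab s
    have hclamp : clamp ∘ k ∈ box := fun x _ => by
      by_cases hx : x ∈ A
      · simp [hx, clamp]
      · simp [hx, clamp, hk x hx, Set.projIcc_of_mem hab (hf x)]
    exact (hmin hclamp).trans <| Finset.sum_le_sum fun p _ =>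
      sq_grad_comp_le (fun s t => Set.abs_projIcc_sub_projIcc hab) k p
  have hgrad (p : V × V) (hp : p ∉ G.nbhdPairs A) : G.grad m p ^ 2 = G.grad f p ^ 2 := by
    have h := grad_eq_zero_of_notMem_nbhdPairs (w := m - f)
      (fun x hx => sub_eq_zero.2 (hmf x hx)) hp
    rw [map_sub, Pi.sub_apply, sub_eq_zero] at h
    rw [h]
  refine ⟨m, hmf, fun x => ?_, fun x hx => ?_,
    summable_and_tsum_le_of_eq_off_finset hfE hgrad (hmin' f fun _ _ => rfl)⟩
  · by_cases hx : x ∈ A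
    · simpa [hx] using hm x (Set.mem_univ x)
    · exact hmf x hx ▸ hf x
  · exact laplacian_eq_zero_of_forall_localEnergy_le (fun w hw =>
      hmin' _ fun x hx => by simp [hw x hx, hmf x hx]) hx

theorem tsum_grad_mul_grad_eq_of_eq_off_finset {h k f : V → ℝ} {A : Finset V}
    (hh : ∀ x ∈ A, G.laplacian h x = 0) (hk : ∀ x ∉ A, k x = f x)
    (hhf : Summable fun p => G.grad h p * G.grad f p) :
    ∑' p, G.grad h p * G.grad k p = ∑' p, G.grad h p * G.grad f p := by
  have hkf : ∀ x ∉ A, (k - f) x = 0 := fun x hx => sub_eq_zero.2 (hk x hx)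
  have hsupp (p : V × V) (hp : p ∉ G.nbhdPairs A) : G.grad h p * G.grad (k - f) p = 0 := by
    rw [grad_eq_zero_of_notMem_nbhdPairs hkf hp, mul_zero]
  have hsplit (p : V × V) :
      G.grad h p * G.grad k p = G.grad h p * G.grad f p + G.grad h p * G.grad (k - f) p := by
    rw [map_sub, Pi.sub_apply]; ring
  rw [tsum_congr hsplit, hhf.tsum_add (summable_of_ne_finset_zero hsupp), tsum_eq_sum hsupp,
    sum_nbhdPairs_grad_mul_grad h hkf, Finset.sum_eq_zero fun x hx => by rw [hh x hx, mul_zero],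
    mul_zero, add_zero]

/-- The harmonic projection of `f`, obtained as a limit along an ultrafilter on finite sets
of solutions of the Dirichlet problems with boundary values `f`. -/
theorem exists_harmonic_inner_grad_eq {a b : ℝ} (hab : a ≤ b) {f : V → ℝ}
    (hf : ∀ x, f x ∈ Set.Icc a b) (hfE : Summable fun p => G.grad f p ^ 2) :
    ∃ g : V → ℝ, (∀ x, G.laplacian g x = 0) ∧ (∀ x, g x ∈ Set.Icc a b) ∧
      Summable (fun p => G.grad g p ^ 2) ∧
      ∀ h : V → ℝ, (∀ x, G.laplacian h x = 0) → Summable (fun p => G.grad h p ^ 2) →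
        ∑' p, G.grad h p * G.grad g p = ∑' p, G.grad h p * G.grad f p := by
  choose m hmf hmab hmharm hmE hmT using exists_dirichlet_solution hab hf hfE
  obtain ⟨U, hU⟩ := Ultrafilter.exists_le (atTop : Filter (Finset V))
  obtain ⟨g, hgab, hg⟩ := (isCompact_univ_pi fun _ => isCompact_Icc (a := a) (b := b))
    |>.ultrafilter_le_nhds (U.map m) <| by
      rw [Ultrafilter.coe_map, le_principal_iff, mem_map]
      exact univ_mem' fun A x _ => hmab A x
  have hmg : Tendsto m U (𝓝 g) := by rwa [Ultrafilter.coe_map] at hg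
  have hgrad (p : V × V) : Tendsto (fun A => G.grad (m A) p) U (𝓝 (G.grad g p)) :=
    ((continuous_grad_apply p).tendsto g).comp hmg
  refine ⟨g, fun x => ?_, fun x => hgab x (Set.mem_univ x),
    (summable_and_tsum_le_of_tendsto (fun _ _ => sq_nonneg _) (fun p => (hgrad p).pow 2)
      hmE hmT).1, fun h hh hhE => ?_⟩
  · have hev : ∀ᶠ A in (U : Filter (Finset V)), G.laplacian (m A) x = 0 :=
      (eventually_ge_atTop {x}).filter_mono hU |>.mono fun A hA =>
        hmharm A x (hA (Finset.mem_singleton_self x))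
    exact tendsto_nhds_unique (((continuous_laplacian_apply x).tendsto g).comp hmg)
      (tendsto_const_nhds.congr' (hev.mono fun A hA => hA.symm))
  · refine tendsto_nhds_unique (tendsto_tsum_mul_of_tendsto hhE hgrad hmE hmT)
      (tendsto_const_nhds.congr fun A => ?_)
    exact (tsum_grad_mul_grad_eq_of_eq_off_finset (fun x _ => hh x) (hmf A)
      (summable_mul_of_summable_sq hhE hfE)).symm

end SimpleGraph

open SimpleGraph

/-- If a connected locally finite graph admits a non-constant harmonic
function of finite Dirichlet energy, then it admits a non-constant *bounded* harmonic
function of finite Dirichlet energy. -/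
theorem harmonic_dirichlet_to_bounded_harmonic_dirichlet
    {V : Type*} (G : SimpleGraph V) [∀ u : V, Fintype (G.neighborSet u)]
    (hconn : G.Connected)
    (h : V → ℝ)
    (hharm : HarmonicOn G h)
    (hfin : FiniteDirichletEnergy G h)
    (hnc : ¬ (∀ u w : V, h u = h w)) :
    ∃ h' : V → ℝ,
      HarmonicOn G h' ∧
      (∃ C : ℝ, ∀ u, |h' u| ≤ C) ∧
      FiniteDirichletEnergy G h' ∧
      ¬ (∀ u w : V, h' u = h' w) := by
  obtain ⟨u, v, huv, hne⟩ : ∃ u v, G.Adj u v ∧ h u ≠ h v := by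
    by_contra! hcon
    exact hnc (hconn.preconnected.eq_of_forall_adj hcon)
  set c := max |h u| |h v|
  have hc : -c ≤ c := neg_le_self ((abs_nonneg _).trans (le_max_left _ _))
  let clamp : ℝ → ℝ := fun s => Set.projIcc (-c) c hc s
  rw [finiteDirichletEnergy_iff] at hfin
  rw [harmonicOn_iff] at hharm
  have hclampE : Summable fun p => G.grad (clamp ∘ h) p ^ 2 :=
    hfin.of_nonneg_of_le (fun _ => sq_nonneg _)
      (sq_grad_comp_le (fun s t => Set.abs_projIcc_sub_projIcc hc) h)
  obtain ⟨g, hgharm, hgc, hgE, hg⟩ := exists_harmonic_inner_grad_eq hc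
    (f := clamp ∘ h) (fun x => (Set.projIcc (-c) c hc (h x)).2) hclampE
  refine ⟨g, (harmonicOn_iff g).2 hgharm, ⟨c, fun x => abs_le.2 (hgc x)⟩,
    (finiteDirichletEnergy_iff g).2 hgE, fun hconst => ?_⟩
  have hpos : 0 < ∑' p, G.grad h p * G.grad (clamp ∘ h) p :=
    tsum_grad_mul_grad_comp_pos (fun s t hst => Set.monotone_projIcc hc hst)
      (summable_mul_of_summable_sq hfin hclampE) huv hne
      (by simp [Set.projIcc_of_mem hc (abs_le.1 (le_max_left |h u| |h v|))])
      (by simp [Set.projIcc_of_mem hc (abs_le.1 (le_max_right |h u| |h v|))])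
  have hg0 (p : V × V) : G.grad g p = 0 := by rw [grad_apply, hconst p.1 p.2, sub_self, ite_self]
  rw [← hg h hharm hfin] at hpos
  simp [hg0] at hpos
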